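/- The shuffle of the two context-free languages L1 = {a^n b a^n : n ≥ 1} and L2 = {b^n a b^n : n ≥ 1} over the binary alphabet {a,b} satisfies (L1 ⧢ L2) ∩ a^* b^* a^* b^* = {a^m b^(n+1) a^(m+1) b^n : m, n ≥ 1}. -/
import Mathlib


/-- `Shuffle u v w` means `w` is an interleaving (shuffle) of `u` and `v`. -/
inductive Shuffle {α : Type*} : List α → List α → List α → Prop
  | nil : Shuffle [] [] []
  | left {a : α} {u v w : List α} : Shuffle u v w → Shuffle (a :: u) v (a :: w)
  | right {a : α} {u v w : List α} : Shuffle u v w → Shuffle u (a :: v) (a :: w)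

/-- The two-letter alphabet {a, b}. -/
inductive AB : Type
  | a : AB
  | b : AB

/-- The shuffle of two languages. -/
def LShuffle {α : Type*} (L₁ L₂ : Set (List α)) : Set (List α) :=
  {w | ∃ u ∈ L₁, ∃ v ∈ L₂, Shuffle u v w}

deriving instance DecidableEq for AB

lemma shuffle_nil_inv {α : Type*} {u v : List α} (h : Shuffle u v []) : u = [] ∧ v = [] := by
  cases h; exact ⟨rfl, rfl⟩

lemma shuffle_left_rep {α : Type*} (x : α) (k : ℕ) {u v w : List α} (h : Shuffle u v w) :
    Shuffle (List.replicate k x ++ u) v (List.replicate k x ++ w) := by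
  induction k with
  | zero => simpa using h
  | succ n ih => simpa [List.replicate_succ] using Shuffle.left ih

lemma shuffle_right_rep {α : Type*} (x : α) (k : ℕ) {u v w : List α} (h : Shuffle u v w) :
    Shuffle u (List.replicate k x ++ v) (List.replicate k x ++ w) := by
  induction k with
  | zero => simpa using h
  | succ n ih => simpa [List.replicate_succ] using Shuffle.right ih

lemma shuffle_rep_prefix {α : Type*} (x : α) :
    ∀ (i : ℕ) {u v t : List α}, Shuffle u v (List.replicate i x ++ t) →
    ∃ i1 i2 u' v', i1 + i2 = i ∧ u = List.replicate i1 x ++ u' ∧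
      v = List.replicate i2 x ++ v' ∧ Shuffle u' v' t := by
  intro i
  induction i with
  | zero => intro u v t h; exact ⟨0, 0, u, v, rfl, rfl, rfl, by simpa using h⟩
  | succ n ih =>
    intro u v t h
    rw [List.replicate_succ, List.cons_append] at h
    cases h with
    | left h' =>
      obtain ⟨i1, i2, u', v', hsum, hu, hv, hs⟩ := ih h'
      exact ⟨i1 + 1, i2, u', v', by omega, by simp [hu, List.replicate_succ], hv, hs⟩
    | right h' =>
      obtain ⟨i1, i2, u', v', hsum, hu, hv, hs⟩ := ih h'
      exact ⟨i1, i2 + 1, u', v', by omega, hu, by simp [hv, List.replicate_succ], hs⟩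

lemma rep_cancel {α : Type*} {x : α} :
    ∀ (i i' : ℕ) {s s' : List α}, s.head? ≠ some x → s'.head? ≠ some x →
    List.replicate i x ++ s = List.replicate i' x ++ s' → i = i' ∧ s = s' := by
  intro i
  induction i with
  | zero =>
    intro i' s s' hs hs' h
    cases i' with
    | zero => simpa using h
    | succ n =>
      simp only [List.replicate_zero, List.nil_append, List.replicate_succ,
        List.cons_append] at h
      rw [h] at hs
      simp at hs
  | succ n ih =>
    intro i' s s' hs hs' h
    cases i' with
    | zero =>
      simp only [List.replicate_zero, List.nil_append, List.replicate_succ,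
        List.cons_append] at h
      rw [← h] at hs'
      simp at hs'
    | succ m =>
      simp only [List.replicate_succ, List.cons_append, List.cons.injEq, true_and] at h
      obtain ⟨he, hrest⟩ := ih m hs hs' h
      exact ⟨by omega, hrest⟩

lemma decomp_u : ∀ (i1 j1 k1 l1 p : ℕ), 1 ≤ p →
    List.replicate i1 AB.a ++ (List.replicate j1 AB.b ++ (List.replicate k1 AB.a ++
      List.replicate l1 AB.b)) =
    List.replicate p AB.a ++ ([AB.b] ++ List.replicate p AB.a) →
    i1 = p ∧ j1 = 1 ∧ k1 = p ∧ l1 = 0 := by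
  intro i1 j1 k1 l1 p hp h
  obtain ⟨p', rfl⟩ : ∃ p', p = p' + 1 := ⟨p - 1, by omega⟩
  -- count of b's
  have hcb := congrArg (List.count AB.b) h
  simp [List.count_append, List.count_replicate] at hcb
  -- hcb : j1 + l1 = 1
  rcases Nat.eq_zero_or_pos j1 with hj | hj
  · -- then l1 = 1, word ends with b, contradiction
    exfalso
    subst hj
    have hl : l1 = 1 := by omega
    subst hl
    simp only [List.replicate_zero, List.nil_append] at h
    have := congrArg List.reverse h
    simp only [List.reverse_append, List.reverse_replicate, List.reverse_cons,
      List.reverse_nil, List.replicate_succ, List.replicate_one] at this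
    cases p' <;> simp [List.replicate_succ] at this
  · obtain ⟨j1', rfl⟩ : ∃ j', j1 = j' + 1 := ⟨j1 - 1, by omega⟩
    have key := rep_cancel (x := AB.a) i1 (p' + 1)
      (s := List.replicate (j1' + 1) AB.b ++ (List.replicate k1 AB.a ++ List.replicate l1 AB.b))
      (s' := [AB.b] ++ List.replicate (p' + 1) AB.a)
      (by simp [List.replicate_succ]) (by simp) h
    obtain ⟨hi, htail⟩ := key
    simp only [List.replicate_succ, List.cons_append, List.nil_append, List.cons.injEq,
      true_and] at htail
    -- htail : replicate j1' b ++ (replicate k1 a ++ replicate l1 b) = replicate (p'+1) a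
    cases j1' with
    | succ j'' =>
      exfalso
      simp [List.replicate_succ] at htail
    | zero =>
      have hl1 : l1 = 0 := by omega
      subst hl1
      simp only [List.replicate_zero, List.nil_append, List.append_nil] at htail
      have := congrArg List.length htail
      simp at this
      exact ⟨hi, rfl, by omega, rfl⟩

lemma decomp_v : ∀ (i2 j2 k2 l2 q : ℕ), 1 ≤ q →
    List.replicate i2 AB.a ++ (List.replicate j2 AB.b ++ (List.replicate k2 AB.a ++
      List.replicate l2 AB.b)) =
    List.replicate q AB.b ++ ([AB.a] ++ List.replicate q AB.b) →
    i2 = 0 ∧ j2 = q ∧ k2 = 1 ∧ l2 = q := by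
  intro i2 j2 k2 l2 q hq h
  obtain ⟨q', rfl⟩ : ∃ q', q = q' + 1 := ⟨q - 1, by omega⟩
  cases i2 with
  | succ i' => exfalso; simp [List.replicate_succ] at h
  | zero =>
    simp only [List.replicate_zero, List.nil_append] at h
    have hca := congrArg (List.count AB.a) h
    simp [List.count_append, List.count_replicate] at hca
    -- hca : k2 = 1
    have hk : k2 = 1 := hca
    subst hk
    have key := rep_cancel (x := AB.b) j2 (q' + 1)
      (s := List.replicate 1 AB.a ++ List.replicate l2 AB.b)
      (s' := [AB.a] ++ List.replicate (q' + 1) AB.b)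
      (by simp) (by simp) h
    obtain ⟨hj, htail⟩ := key
    have hlen := congrArg List.length htail
    simp at hlen
    exact ⟨rfl, hj, rfl, by omega⟩

/-- (L₁ ⧢ L₂) ∩ a^* b^* a^* b^* = {a^m b^(n+1) a^(m+1) b^n : m, n ≥ 1} where
L₁ = {a^n b a^n : n ≥ 1} and L₂ = {b^n a b^n : n ≥ 1}. -/
theorem stmt_4 :
    LShuffle
        {w | ∃ n : ℕ, 1 ≤ n ∧
            w = List.replicate n AB.a ++ [AB.b] ++ List.replicate n AB.a}
        {w | ∃ n : ℕ, 1 ≤ n ∧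
            w = List.replicate n AB.b ++ [AB.a] ++ List.replicate n AB.b} ∩
      {w | ∃ i j k l : ℕ, w = List.replicate i AB.a ++ List.replicate j AB.b ++
            List.replicate k AB.a ++ List.replicate l AB.b} =
    {w | ∃ m n : ℕ, 1 ≤ m ∧ 1 ≤ n ∧
        w = List.replicate m AB.a ++ List.replicate (n + 1) AB.b ++
            List.replicate (m + 1) AB.a ++ List.replicate n AB.b} := by
  ext w
  constructor
  · rintro ⟨⟨u, ⟨p, hp, rfl⟩, v, ⟨q, hq, rfl⟩, hsh⟩, ⟨i, j, k, l, rfl⟩⟩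
    -- peel the four blocks
    simp only [List.append_assoc] at hsh
    obtain ⟨i1, i2, u1, v1, hisum, hu1, hv1, hs1⟩ := shuffle_rep_prefix AB.a i hsh
    obtain ⟨j1, j2, u2, v2, hjsum, hu2, hv2, hs2⟩ := shuffle_rep_prefix AB.b j hs1
    obtain ⟨k1, k2, u3, v3, hksum, hu3, hv3, hs3⟩ := shuffle_rep_prefix AB.a k hs2
    rw [show (List.replicate l AB.b : List AB) = List.replicate l AB.b ++ [] by simp] at hs3
    obtain ⟨l1, l2, u4, v4, hlsum, hu4, hv4, hs4⟩ := shuffle_rep_prefix AB.b l hs3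
    obtain ⟨hu4', hv4'⟩ := shuffle_nil_inv hs4
    subst hu4' hv4'
    simp only [List.append_nil] at hu4 hv4
    subst hu4 hv4 hu3 hv3 hu2 hv2
    obtain ⟨e1, e2, e3, e4⟩ := decomp_u i1 j1 k1 l1 p hp hu1.symm
    obtain ⟨f1, f2, f3, f4⟩ := decomp_v i2 j2 k2 l2 q hq hv1.symm
    refine ⟨p, q, hp, hq, ?_⟩
    have : i = p ∧ j = q + 1 ∧ k = p + 1 ∧ l = q := by omega
    obtain ⟨rfl, rfl, rfl, rfl⟩ := this
    rfl
  · rintro ⟨m, n, hm, hn, rfl⟩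
    constructor
    · refine ⟨List.replicate m AB.a ++ [AB.b] ++ List.replicate m AB.a, ⟨m, hm, rfl⟩,
        List.replicate n AB.b ++ [AB.a] ++ List.replicate n AB.b, ⟨n, hn, rfl⟩, ?_⟩
      have h0 : Shuffle ([] : List AB) (List.replicate n AB.b) (List.replicate n AB.b) :=
        by simpa using shuffle_right_rep AB.b n Shuffle.nil
      have h1 := shuffle_left_rep AB.a m h0
      have h2 := Shuffle.right (a := AB.a) h1
      have h3 := shuffle_right_rep AB.b n h2
      have h4 := Shuffle.left (a := AB.b) h3
      have h5 := shuffle_left_rep AB.a m h4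
      have goal_eq : (List.replicate m AB.a ++ List.replicate (n + 1) AB.b ++
          List.replicate (m + 1) AB.a ++ List.replicate n AB.b : List AB) =
          List.replicate m AB.a ++ (AB.b :: (List.replicate n AB.b ++
            (AB.a :: (List.replicate m AB.a ++ List.replicate n AB.b)))) := by
        simp [List.replicate_succ, List.append_assoc]
      rw [goal_eq]
      have hu_eq : (List.replicate m AB.a ++ [AB.b] ++ List.replicate m AB.a : List AB) =
          List.replicate m AB.a ++ (AB.b :: (List.replicate m AB.a ++ [])) := by
        simp
      have hv_eq : (List.replicate n AB.b ++ [AB.a] ++ List.replicate n AB.b : List AB) =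
          List.replicate n AB.b ++ (AB.a :: (List.replicate n AB.b)) := by
        simp
      rw [hu_eq, hv_eq]
      simpa using h5
    · exact ⟨m, n + 1, m + 1, n, rfl⟩
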